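/- arXiv:1902.08223 — 2 statements merged into one kernel-verified Lean document; each statement's English description precedes it below -/
import Mathlib

section
/- Let Y be a Young diagram with z steps. Then Y admits an (i,j)-local cover by generalized rectangles if and only if the staircase Y_z = {(s,t) ∈ [z]×[z] : s+t ≤ z+1} admits an (i,j)-local cover by generalized rectangles. -/
open scoped Classical

/-- The staircase Young diagram `Y_z = {(s,t) ∈ [z]×[z] : s+t ≤ z+1}`. -/
def Yd (z : ℕ) : Set (ℕ × ℕ) :=
  {p | p.1 ∈ Set.Icc 1 z ∧ p.2 ∈ Set.Icc 1 z ∧ p.1 + p.2 ≤ z + 1}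

/-- A Young diagram with `r` rows and `c` columns: a down-left closed subset of `[r]×[c]`. -/
def IsYoung (r c : ℕ) (Y : Set (ℕ × ℕ)) : Prop :=
  Y ⊆ Set.Icc 1 r ×ˢ Set.Icc 1 c ∧
  ∀ p ∈ Y, (2 ≤ p.1 → (p.1 - 1, p.2) ∈ Y) ∧ (2 ≤ p.2 → (p.1, p.2 - 1) ∈ Y)

/-- A step of `Y`: an element whose right and upper neighbours are outside `Y`. -/
def IsStep (Y : Set (ℕ × ℕ)) (p : ℕ × ℕ) : Prop :=
  p ∈ Y ∧ (p.1 + 1, p.2) ∉ Y ∧ (p.1, p.2 + 1) ∉ Y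

def steps (Y : Set (ℕ × ℕ)) : Set (ℕ × ℕ) := {p | IsStep Y p}

/-- A generalized rectangle in `Y`: a product set contained in `Y`. -/
def IsRect (Y R : Set (ℕ × ℕ)) : Prop :=
  (∃ S T : Set ℕ, R = S ×ˢ T) ∧ R ⊆ Y

/-- An actual rectangle in `Y`: a product of intervals contained in `Y`. -/
def IsActualRect (Y R : Set (ℕ × ℕ)) : Prop :=
  (∃ a b u v : ℕ, R = Set.Icc a b ×ˢ Set.Icc u v) ∧ R ⊆ Y

def UsesRow (R : Set (ℕ × ℕ)) (s : ℕ) : Prop := ∃ t, (s, t) ∈ R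
def UsesCol (R : Set (ℕ × ℕ)) (t : ℕ) : Prop := ∃ s, (s, t) ∈ R

/-- A cover of `Y` by generalized rectangles. -/
def IsCover (Y : Set (ℕ × ℕ)) (C : Finset (Set (ℕ × ℕ))) : Prop :=
  (∀ R ∈ C, IsRect Y R) ∧ (⋃ R ∈ C, R) = Y

/-- `(i,j)`-locality: each row used by at most `i`, each column by at most `j` rectangles. -/
def IsLocal (i j : ℕ) (C : Finset (Set (ℕ × ℕ))) : Prop :=
  (∀ s, (C.filter (fun R => UsesRow R s)).card ≤ i) ∧
  (∀ t, (C.filter (fun R => UsesCol R t)).card ≤ j)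

def IsLocalCover (i j : ℕ) (Y : Set (ℕ × ℕ)) (C : Finset (Set (ℕ × ℕ))) : Prop :=
  IsCover Y C ∧ IsLocal i j C

/-!
The cells of a Young diagram `Y` are exactly the cells with positive coordinates lying weakly
below-left of a step, and the `z` steps form an antichain: ordered by increasing row, their
columns decrease. Hence `(s, t) ∈ Y` iff the steps in rows `< s` and the steps in columns `< t`
together number fewer than `z`, i.e. iff `(1 + #{steps in rows < s}, 1 + #{steps in columns < t})`
lies in the staircase `Y_z`. Rectangle covers pull back along such a pair of coordinate maps
without increasing the load of any row or column, and the maps hit every row and column of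
`Y_z`, so a section of them transports covers in the other direction.
-/
open Finset Function

section Transfer

variable {i j : ℕ} {Y Y' : Set (ℕ × ℕ)} {P Q : Set ℕ} {φ ψ : ℕ → ℕ}

lemma card_filter_image_le {α β : Type*} [DecidableEq β] (C : Finset α) (g : α → β)
    {p : β → Prop} {q : α → Prop} [DecidablePred p] [DecidablePred q]
    (h : ∀ a ∈ C, p (g a) → q a) : #{b ∈ C.image g | p b} ≤ #{a ∈ C | q a} := by
  rw [filter_image]
  exact card_image_le.trans (card_le_card (monotone_filter_right C h))

lemma exists_isLocalCover_of_eq_inter_preimage (h : Y = P ×ˢ Q ∩ Prod.map φ ψ ⁻¹' Y') :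
    (∃ C, IsLocalCover i j Y' C) → ∃ C, IsLocalCover i j Y C := by
  rintro ⟨C, ⟨hrect, hcov⟩, hrow, hcol⟩
  set g : Set (ℕ × ℕ) → Set (ℕ × ℕ) := fun R => P ×ˢ Q ∩ Prod.map φ ψ ⁻¹' R
  refine ⟨C.image g, ⟨fun R hR => ?_, ?_⟩, fun s => ?_, fun t => ?_⟩
  · obtain ⟨R, hRC, rfl⟩ := mem_image.1 hR
    obtain ⟨⟨S, T, rfl⟩, hsub⟩ := hrect R hRC
    refine ⟨⟨P ∩ φ ⁻¹' S, Q ∩ ψ ⁻¹' T, ?_⟩,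
      h ▸ Set.inter_subset_inter_right _ (Set.preimage_mono hsub)⟩
    simp only [g, Set.preimage_prod_map_prod, Set.prod_inter_prod]
  · rw [set_biUnion_finset_image, h, ← hcov]
    simp only [g, Set.preimage_iUnion₂, Set.inter_iUnion₂]
  · exact (card_filter_image_le C g fun R _ ⟨t, hst⟩ => ⟨ψ t, hst.2⟩).trans (hrow (φ s))
  · exact (card_filter_image_le C g fun R _ ⟨s, hst⟩ => ⟨φ s, hst.2⟩).trans (hcol (ψ t))

lemma eq_inter_preimage_invFunOn (h : Y = P ×ˢ Q ∩ Prod.map φ ψ ⁻¹' Y')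
    (h' : Y' ⊆ (φ '' P) ×ˢ (ψ '' Q)) :
    Y' = (φ '' P) ×ˢ (ψ '' Q) ∩ Prod.map (invFunOn φ P) (invFunOn ψ Q) ⁻¹' Y := by
  ext ⟨a, b⟩
  have key (ha : a ∈ φ '' P) (hb : b ∈ ψ '' Q) :
      (invFunOn φ P a, invFunOn ψ Q b) ∈ Y ↔ (a, b) ∈ Y' := by
    rw [h]
    simp only [Set.mem_inter_iff, Set.mem_prod, Set.mem_preimage, Prod.map, invFunOn_mem ha,
      invFunOn_mem hb, invFunOn_eq ha, invFunOn_eq hb, true_and]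
  exact ⟨fun hab => ⟨h' hab, (key (h' hab).1 (h' hab).2).2 hab⟩,
    fun ⟨⟨ha, hb⟩, hab⟩ => (key ha hb).1 hab⟩

lemma exists_isLocalCover_iff_of_eq_inter_preimage (h : Y = P ×ˢ Q ∩ Prod.map φ ψ ⁻¹' Y')
    (h' : Y' ⊆ (φ '' P) ×ˢ (ψ '' Q)) :
    (∃ C, IsLocalCover i j Y C) ↔ ∃ C, IsLocalCover i j Y' C :=
  ⟨exists_isLocalCover_of_eq_inter_preimage (eq_inter_preimage_invFunOn h h'),
    exists_isLocalCover_of_eq_inter_preimage h⟩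

end Transfer

section Rank

variable {ι : Type*} {A : Finset ι} {f : ι → ℕ}

def rank (A : Finset ι) (f : ι → ℕ) (n : ℕ) : ℕ := #{x ∈ A | f x < n} + 1

lemma rank_lt_rank {x : ι} (hx : x ∈ A) {n : ℕ} (h : f x < n) : rank A f (f x) < rank A f n := by
  have hsub : {y ∈ A | f y < f x} ⊂ {y ∈ A | f y < n} :=
    (ssubset_iff_of_subset (monotone_filter_right A fun _ _ hy => hy.trans h)).2
      ⟨x, by simp [hx, h], by simp⟩
  exact Nat.succ_lt_succ (card_lt_card hsub)

lemma image_rank_eq_Icc (hf : Set.InjOn f A) : A.image (rank A f ∘ f) = Icc 1 #A := by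
  refine eq_of_subset_of_card_le (fun n hn => ?_) ?_
  · obtain ⟨x, hx, rfl⟩ := mem_image.1 hn
    have : #{y ∈ A | f y < f x} < #A :=
      card_lt_card (filter_ssubset.2 ⟨x, hx, lt_irrefl _⟩)
    simp only [Function.comp, rank, mem_Icc]
    omega
  · rw [Nat.card_Icc, add_tsub_cancel_right, card_image_of_injOn]
    intro x hx y hy hxy
    by_contra hne
    rcases lt_or_gt_of_ne (hf.ne hx hy hne) with h | h
    · exact (rank_lt_rank hx h).ne hxy
    · exact (rank_lt_rank hy h).ne' hxy

end Rank

section Antichain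

variable {α β : Type*} [LinearOrder α] [LinearOrder β] {s : Set (α × β)}

lemma IsAntichain.snd_lt_of_fst_lt (hs : IsAntichain (· ≤ ·) s) {x y : α × β} (hx : x ∈ s)
    (hy : y ∈ s) (h : x.1 < y.1) : y.2 < x.2 := by
  by_contra! hxy
  exact hs hx hy (ne_of_apply_ne Prod.fst h.ne) (Prod.le_def.2 ⟨h.le, hxy⟩)

lemma IsAntichain.injOn_fst (hs : IsAntichain (· ≤ ·) s) : Set.InjOn Prod.fst s := by
  intro x hx y hy h
  by_contra hne
  rcases le_total x.2 y.2 with h2 | h2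
  · exact hs hx hy hne (Prod.le_def.2 ⟨h.le, h2⟩)
  · exact hs hy hx (Ne.symm hne) (Prod.le_def.2 ⟨h.ge, h2⟩)

lemma IsAntichain.injOn_snd (hs : IsAntichain (· ≤ ·) s) : Set.InjOn Prod.snd s := by
  intro x hx y hy h
  by_contra hne
  rcases le_total x.1 y.1 with h1 | h1
  · exact hs hx hy hne (Prod.le_def.2 ⟨h1, h.le⟩)
  · exact hs hy hx (Ne.symm hne) (Prod.le_def.2 ⟨h1, h.ge⟩)

lemma exists_ge_iff_card_lt {A : Finset (α × β)} (hA : IsAntichain (· ≤ ·) (A : Set (α × β)))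
    (p : α × β) : (∃ x ∈ A, p ≤ x) ↔ #{x ∈ A | x.1 < p.1} + #{x ∈ A | x.2 < p.2} < #A := by
  set U := {x ∈ A | p.1 ≤ x.1}
  set L := {x ∈ A | p.2 ≤ x.2}
  have hU : #{x ∈ A | x.1 < p.1} + #U = #A := by
    simpa only [not_lt] using card_filter_add_card_filter_not (s := A) (fun x : α × β => x.1 < p.1)
  have hL : #{x ∈ A | x.2 < p.2} + #L = #A := by
    simpa only [not_lt] using card_filter_add_card_filter_not (s := A) (fun x : α × β => x.2 < p.2)
  have hUL := card_union_add_card_inter U L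
  have hsub : U ∪ L ⊆ A := union_subset (filter_subset _ A) (filter_subset _ A)
  have hunion : (U ∩ L).Nonempty → U ∪ L = A := by
    rintro ⟨y, hy⟩
    simp only [U, L, mem_inter, mem_filter] at hy
    refine hsub.antisymm fun x hx => ?_
    simp only [U, L, mem_union, mem_filter, hx, true_and]
    by_contra! hlt
    have hyx : y.2 < x.2 := hA.snd_lt_of_fst_lt hx hy.1.1 (hlt.1.trans_le hy.1.2)
    exact lt_irrefl _ ((hyx.trans hlt.2).trans_le hy.2.2)
  have hinter : (∃ x ∈ A, p ≤ x) ↔ (U ∩ L).Nonempty := by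
    simp only [U, L, Finset.Nonempty, mem_inter, mem_filter, Prod.le_def]
    exact ⟨fun ⟨x, hx, h1, h2⟩ => ⟨x, ⟨hx, h1⟩, hx, h2⟩,
      fun ⟨x, ⟨hx, h1⟩, _, h2⟩ => ⟨x, hx, h1, h2⟩⟩
  rw [hinter]
  constructor
  · intro hne
    rw [hunion hne] at hUL
    have := hne.card_pos
    omega
  · intro hlt
    by_contra hemp
    rw [not_nonempty_iff_eq_empty.1 hemp, card_empty] at hUL
    have := card_le_card hsub
    omega

end Antichain

namespace IsYoung

variable {r c : ℕ} {Y : Set (ℕ × ℕ)}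

lemma one_le_of_mem (hY : IsYoung r c Y) {p : ℕ × ℕ} (hp : p ∈ Y) : 1 ≤ p.1 ∧ 1 ≤ p.2 :=
  ⟨(hY.1 hp).1.1, (hY.1 hp).2.1⟩

lemma mem_of_le (hY : IsYoung r c Y) {p q : ℕ × ℕ} (hq : q ∈ Y) (hpq : p ≤ q) (hp1 : 1 ≤ p.1)
    (hp2 : 1 ≤ p.2) : p ∈ Y := by
  obtain ⟨a, b⟩ := p
  obtain ⟨a', b'⟩ := q
  obtain ⟨ha, hb⟩ := Prod.mk_le_mk.1 hpq
  obtain ⟨m, rfl⟩ := Nat.exists_eq_add_of_le ha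
  obtain ⟨n, rfl⟩ := Nat.exists_eq_add_of_le hb
  have down_row (m : ℕ) : (a + m, b + n) ∈ Y → (a, b + n) ∈ Y := by
    induction m with
    | zero => exact id
    | succ m ih => exact fun h => ih (by simpa using (hY.2 _ h).1 (by omega))
  have down_col (n : ℕ) : (a, b + n) ∈ Y → (a, b) ∈ Y := by
    induction n with
    | zero => exact id
    | succ n ih => exact fun h => ih (by simpa using (hY.2 _ h).2 (by omega))
  exact down_col n (down_row m hq)

lemma finite (hY : IsYoung r c Y) : Y.Finite :=
  ((Set.finite_Icc 1 r).prod (Set.finite_Icc 1 c)).subset hY.1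

lemma isAntichain_steps (hY : IsYoung r c Y) : IsAntichain (· ≤ ·) (steps Y) := by
  intro x hx y hy hne hxy
  have hx1 := hY.one_le_of_mem hx.1
  rcases (Prod.le_def.1 hxy).1.lt_or_eq with h1 | h1
  · exact hx.2.1 (hY.mem_of_le hy.1 (Prod.le_def.2 ⟨h1, hxy.2⟩) (by omega) hx1.2)
  rcases (Prod.le_def.1 hxy).2.lt_or_eq with h2 | h2
  · exact hx.2.2 (hY.mem_of_le hy.1 (Prod.le_def.2 ⟨hxy.1, h2⟩) hx1.1 (by omega))
  exact hne (Prod.ext h1 h2)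

lemma exists_step_ge (hY : IsYoung r c Y) {p : ℕ × ℕ} (hp : p ∈ Y) : ∃ x ∈ steps Y, p ≤ x := by
  obtain ⟨x, ⟨hxY, hpx⟩, hmax⟩ :=
    (hY.finite.inter_of_left (Set.Ici p)).exists_maximal ⟨p, hp, Set.self_mem_Ici⟩
  have not_mem_of_lt {y : ℕ × ℕ} (hxy : x < y) : y ∉ Y := fun hy =>
    hxy.not_ge (hmax ⟨hy, hpx.trans hxy.le⟩ hxy.le)
  refine ⟨x, ⟨hxY, not_mem_of_lt ?_, not_mem_of_lt ?_⟩, hpx⟩ <;>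
    simp [Prod.lt_iff]

lemma mem_iff_exists_step_ge (hY : IsYoung r c Y) {p : ℕ × ℕ} (hp1 : 1 ≤ p.1) (hp2 : 1 ≤ p.2) :
    p ∈ Y ↔ ∃ x ∈ steps Y, p ≤ x :=
  ⟨hY.exists_step_ge, fun ⟨_, hx, hpx⟩ => hY.mem_of_le hx.1 hpx hp1 hp2⟩

lemma eq_inter_preimage_staircase (hY : IsYoung r c Y) {A : Finset (ℕ × ℕ)}
    (hA : (A : Set (ℕ × ℕ)) = steps Y) :
    Y = Set.Icc 1 r ×ˢ Set.Icc 1 c ∩ Prod.map (rank A Prod.fst) (rank A Prod.snd) ⁻¹' Yd #A := by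
  ext ⟨s, t⟩
  by_cases hb : (s, t) ∈ Set.Icc 1 r ×ˢ Set.Icc 1 c
  · rw [Set.mem_inter_iff, and_iff_right hb, Set.mem_preimage, Prod.map_apply,
      hY.mem_iff_exists_step_ge hb.1.1 hb.2.1, ← hA]
    simp only [mem_coe, exists_ge_iff_card_lt (hA ▸ hY.isAntichain_steps), Yd, rank,
      Set.mem_ofPred_eq, Set.mem_Icc]
    omega
  · exact ⟨fun h => absurd (hY.1 h) hb, fun h => absurd h.1 hb⟩

lemma staircase_subset_image (hY : IsYoung r c Y) {A : Finset (ℕ × ℕ)}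
    (hA : (A : Set (ℕ × ℕ)) = steps Y) :
    Yd #A ⊆ (rank A Prod.fst '' Set.Icc 1 r) ×ˢ (rank A Prod.snd '' Set.Icc 1 c) := by
  have hanti : IsAntichain (· ≤ ·) (A : Set (ℕ × ℕ)) := hA ▸ hY.isAntichain_steps
  have hbox : (A : Set (ℕ × ℕ)) ⊆ Set.Icc 1 r ×ˢ Set.Icc 1 c := hA ▸ fun x hx => hY.1 hx.1
  have hIcc (f : ℕ × ℕ → ℕ) (hf : Set.InjOn f A) : Set.Icc 1 #A = rank A f '' (f '' A) := by
    rw [← coe_Icc, ← image_rank_eq_Icc hf, coe_image, Set.image_comp]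
  have hrows : Prod.fst '' (A : Set (ℕ × ℕ)) ⊆ Set.Icc 1 r :=
    Set.image_subset_iff.2 fun x hx => (hbox hx).1
  have hcols : Prod.snd '' (A : Set (ℕ × ℕ)) ⊆ Set.Icc 1 c :=
    Set.image_subset_iff.2 fun x hx => (hbox hx).2
  rintro ⟨a, b⟩ ⟨ha, hb, -⟩
  exact ⟨Set.image_mono hrows (hIcc _ hanti.injOn_fst ▸ ha),
    Set.image_mono hcols (hIcc _ hanti.injOn_snd ▸ hb)⟩

end IsYoung

theorem local_cover_iff_staircase (i j z r c : ℕ) (Y : Set (ℕ × ℕ))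
    (hY : IsYoung r c Y) (hz : (steps Y).ncard = z) :
    (∃ C : Finset (Set (ℕ × ℕ)), IsLocalCover i j Y C) ↔
    (∃ C : Finset (Set (ℕ × ℕ)), IsLocalCover i j (Yd z) C) := by
  obtain ⟨A, hA⟩ : ∃ A : Finset (ℕ × ℕ), ↑A = steps Y :=
    ⟨(hY.finite.subset fun _ hx => hx.1).toFinset, Set.Finite.coe_toFinset _⟩
  obtain rfl : #A = z := by rw [← hz, ← hA, Set.ncard_coe_finset]
  exact exists_isLocalCover_iff_of_eq_inter_preimage (hY.eq_inter_preimage_staircase hA)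
    (hY.staircase_subset_image hA)
end

section
/- For every k ≥ 1 there exists a Young diagram (namely the staircase with C(2k,k) steps) that cannot be covered by generalized rectangles with every row and column used at most k times; hence the sequence of local complete-bipartite covering numbers of the difference graphs H_i corresponding to the staircases Y_i is unbounded, while each H_i is itself a difference graph (local difference-graph covering number 1). -/
/-! Given a cover of the staircase `Y_z`, let `A_s` and `B_s` (`s = 0, …, z`) be the sets of
rectangles through row `s + 1` and through column `z + 1 - s`. A rectangle meeting both a row
and a column contains their crossing cell, so `A_s ∩ B_s = ∅` (that cell lies just outside `Y_z`),
while `A_s ∩ B_t ≠ ∅` for `s < t` (that cell lies inside `Y_z` and is covered). By the skew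
Bollobás inequality, `z + 1` such pairs with `|A_s| ≤ a`, `|B_s| ≤ b` force
`z + 1 ≤ C(a + b, a)`; so no `k`-local cover of `Y_z` exists for `z = C(2k, k)`.

The Bollobás bound is Lovász's polynomial argument: the matrix
`(∏_{x ∈ A_i} ∏_{y ∈ B_j} (x - y))_{i,j}` is triangular with nonzero diagonal, and its rows are
values of symmetric polynomials in `a` variables of degree `≤ b` in each variable, a space of
dimension `C(a + b, a)`. -/

open scoped Classical

open Finset Polynomial

theorem Matrix.rank_of_prod_eval_le_choose {R ι κ : Type*} [CommSemiring R]
    [StrongRankCondition R] [Fintype κ] {a b : ℕ} (x : ι → Fin a → R) (P : κ → R[X])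
    (hP : ∀ j, (P j).natDegree ≤ b) :
    (Matrix.of fun i j => ∏ k, (P j).eval (x i k)).rank ≤ (a + b).choose a := by
  let toSym : (Fin a → Fin (b + 1)) → Sym (Fin (b + 1)) a :=
    fun φ => ⟨univ.val.map φ, by simp⟩
  let U : Matrix ι (Sym (Fin (b + 1)) a) R :=
    .of fun i s => ∑ φ : {φ // toSym φ = s}, ∏ k, x i k ^ (φ.1 k : ℕ)
  let W : Matrix (Sym (Fin (b + 1)) a) κ R :=
    .of fun s j => (s.1.map fun d : Fin (b + 1) => (P j).coeff d).prod
  have hUW : (Matrix.of fun i j => ∏ k, (P j).eval (x i k)) = U * W := by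
    ext i j
    have hW : ∀ φ, ∏ k, (P j).coeff (φ k) = W (toSym φ) j := fun φ => by
      change _ = ((univ.val.map φ).map fun d : Fin (b + 1) => (P j).coeff d).prod
      rw [Multiset.map_map]
      exact (prod_map_val univ _).symm
    calc ∏ k, (P j).eval (x i k)
        = ∏ k, ∑ d : Fin (b + 1), (P j).coeff d * x i k ^ (d : ℕ) := by
          simp only [eval_eq_sum_range' (Nat.lt_succ_of_le (hP j)), sum_range]
      _ = ∑ φ : Fin a → Fin (b + 1), (∏ k, x i k ^ (φ k : ℕ)) * W (toSym φ) j := by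
          rw [prod_univ_sum, Fintype.piFinset_univ]
          refine sum_congr rfl fun φ _ => ?_
          rw [← hW, prod_mul_distrib, mul_comm]
      _ = (U * W) i j := by
          rw [← Fintype.sum_fiberwise toSym, Matrix.mul_apply]
          refine sum_congr rfl fun s _ => ?_
          simp only [U, Matrix.of_apply, sum_mul]
          exact sum_congr rfl fun φ _ => by rw [φ.2]
  rw [hUW]
  calc (U * W).rank ≤ W.rank := Matrix.rank_mul_le_right U W
    _ ≤ Fintype.card (Sym (Fin (b + 1)) a) := Matrix.rank_le_card_height W
    _ = (a + b).choose a := by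
      rw [Sym.card_sym_eq_choose, Fintype.card_fin, Nat.add_right_comm, Nat.add_sub_cancel,
        add_comm]

theorem Finset.exists_fin_tuple_prod_eq_prod_mul_pow {α β M : Type*} [CommMonoid M]
    (s : Finset α) {a : ℕ} (hs : #s ≤ a) (v : α → β) (c : β) :
    ∃ e : Fin a → β, ∀ g : β → M, ∏ k, g (e k) = (∏ x ∈ s, g (v x)) * g c ^ (a - #s) := by
  refine ⟨fun k => Fin.append (fun l => v (s.equivFin.symm l)) (fun _ : Fin (a - #s) => c)
    (Fin.cast (Nat.add_sub_cancel' hs).symm k), fun g => ?_⟩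
  rw [Fin.prod_congr' (fun k => g (Fin.append _ _ k)), Fin.prod_univ_add]
  simp only [Fin.append_left, Fin.append_right, prod_const, card_univ, Fintype.card_fin]
  rw [Equiv.prod_comp s.equivFin.symm fun x => g (v x), prod_coe_sort s fun x => g (v x)]

theorem Matrix.rank_eq_card_of_isLowerTriangular {R m : Type*} [CommRing R] [IsDomain R]
    [Fintype m] [LinearOrder m] (A : Matrix m m R) (hA : A.IsLowerTriangular)
    (hd : ∀ i, A i i ≠ 0) : A.rank = Fintype.card m := by
  calc A.rank = (A * 1).rank := by rw [Matrix.mul_one]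
    _ = (1 : Matrix m m R).rank := Matrix.rank_mul_eq_right_of_isLowerTriangular A 1 hA hd
    _ = Fintype.card m := Matrix.rank_one

theorem card_le_choose_of_skew_crossIntersecting {α ι : Type*} [Fintype ι] [LinearOrder ι]
    {a b : ℕ} (A B : ι → Finset α) (hA : ∀ i, #(A i) ≤ a) (hB : ∀ i, #(B i) ≤ b)
    (hAB : ∀ i, Disjoint (A i) (B i)) (hcross : ∀ i j, i < j → ¬Disjoint (A i) (B j)) :
    Fintype.card ι ≤ (a + b).choose a := by
  let P : ι → (MvPolynomial α ℤ)[X] := fun j => ∏ y ∈ B j, (X - C (MvPolynomial.X y))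
  have hP : ∀ j, (P j).natDegree ≤ b := fun j => by
    simpa only [P, natDegree_finsetProd_X_sub_C_eq_card] using hB j
  -- The elements of `α` become independent indeterminates, and each `A i` is padded to `a` points
  -- by `0`, which is a root of no `P j`.
  choose e he using fun i => (A i).exists_fin_tuple_prod_eq_prod_mul_pow
    (M := MvPolynomial α ℤ) (hA i) MvPolynomial.X (0 : MvPolynomial α ℤ)
  let M : Matrix ι ι (MvPolynomial α ℤ) := .of fun i j => ∏ k, (P j).eval (e i k)
  have hM : ∀ i j, M i j = (∏ x ∈ A i, ∏ y ∈ B j, (MvPolynomial.X x - MvPolynomial.X y)) *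
      (∏ y ∈ B j, -MvPolynomial.X y) ^ (a - #(A i)) := fun i j => by
    change ∏ k, (P j).eval (e i k) = _
    rw [he i fun r => (P j).eval r]
    simp [P, eval_prod]
  have hlower : M.IsLowerTriangular := fun i j hij => by
    obtain ⟨x, hxA, hxB⟩ := not_disjoint_iff.1 (hcross i j hij)
    rw [hM, prod_eq_zero hxA (prod_eq_zero hxB (sub_self _)), zero_mul]
  have hdiag : ∀ i, M i i ≠ 0 := fun i => by
    rw [hM]
    refine mul_ne_zero (prod_ne_zero_iff.2 fun x hx => prod_ne_zero_iff.2 fun y hy => ?_)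
      (pow_ne_zero _ (prod_ne_zero_iff.2 fun y _ => neg_ne_zero.2 (MvPolynomial.X_ne_zero y)))
    exact sub_ne_zero.2 fun h =>
      disjoint_left.1 (hAB i) hx (MvPolynomial.X_injective h ▸ hy)
  calc Fintype.card ι = M.rank := (M.rank_eq_card_of_isLowerTriangular hlower hdiag).symm
    _ ≤ (a + b).choose a := Matrix.rank_of_prod_eval_le_choose e P hP

theorem mem_Yd {z s t : ℕ} :
    (s, t) ∈ Yd z ↔ 1 ≤ s ∧ s ≤ z ∧ 1 ≤ t ∧ t ≤ z ∧ s + t ≤ z + 1 := by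
  simp only [Yd, Set.mem_ofPred_eq, Set.mem_Icc, and_assoc]

theorem isYoung_Yd (z : ℕ) : IsYoung z z (Yd z) := by
  refine ⟨fun p hp => ⟨hp.1, hp.2.1⟩, fun ⟨s, t⟩ hp => ?_⟩
  rw [mem_Yd] at hp
  exact ⟨fun _ => mem_Yd.2 (by omega), fun _ => mem_Yd.2 (by omega)⟩

theorem Yd_row_subset_of_le {z a a' : ℕ} (ha : 1 ≤ a) (h : a ≤ a') :
    {b | (a', b) ∈ Yd z} ⊆ {b | (a, b) ∈ Yd z} := fun b hb => by
  simp only [Set.mem_ofPred_eq, mem_Yd] at hb ⊢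
  omega

theorem IsRect.mem_of_usesRow_of_usesCol {Y R : Set (ℕ × ℕ)} {s t : ℕ} (hR : IsRect Y R)
    (hs : UsesRow R s) (ht : UsesCol R t) : (s, t) ∈ Y := by
  obtain ⟨⟨S, T, rfl⟩, hRY⟩ := hR
  obtain ⟨t', hst'⟩ := hs
  obtain ⟨s', hs't⟩ := ht
  exact hRY ⟨hst'.1, hs't.2⟩

theorem IsCover.exists_mem {Y : Set (ℕ × ℕ)} {C : Finset (Set (ℕ × ℕ))} (hC : IsCover Y C)
    {p : ℕ × ℕ} (hp : p ∈ Y) : ∃ R ∈ C, p ∈ R := by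
  rw [← hC.2] at hp
  simpa only [Set.mem_iUnion, exists_prop] using hp

theorem IsLocalCover.succ_le_choose_of_Yd {i j z : ℕ} {C : Finset (Set (ℕ × ℕ))}
    (hC : IsLocalCover i j (Yd z) C) : z + 1 ≤ (i + j).choose i := by
  obtain ⟨hcover, hrow, hcol⟩ := hC
  have hdisj : ∀ s : Fin (z + 1),
      Disjoint (C.filter (UsesRow · (s + 1))) (C.filter (UsesCol · (z + 1 - s))) := by
    refine fun s => disjoint_left.2 fun R hRs hRs' => ?_
    rw [mem_filter] at hRs hRs'
    have := mem_Yd.1 ((hcover.1 R hRs.1).mem_of_usesRow_of_usesCol hRs.2 hRs'.2)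
    omega
  have hcross : ∀ s t : Fin (z + 1), s < t →
      ¬Disjoint (C.filter (UsesRow · (s + 1))) (C.filter (UsesCol · (z + 1 - t))) := by
    intro s t hst
    rw [Fin.lt_def] at hst
    obtain ⟨R, hRC, hR⟩ := hcover.exists_mem (p := ((s : ℕ) + 1, z + 1 - t))
      (mem_Yd.2 (by omega))
    exact not_disjoint_iff.2 ⟨R, mem_filter.2 ⟨hRC, _, hR⟩, mem_filter.2 ⟨hRC, _, hR⟩⟩
  simpa using card_le_choose_of_skew_crossIntersecting _ _ (fun _ => hrow _) (fun _ => hcol _)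
    hdisj hcross

theorem staircases_unbounded :
    (∀ k : ℕ, 1 ≤ k →
      IsYoung ((2 * k).choose k) ((2 * k).choose k) (Yd ((2 * k).choose k)) ∧
      ¬ ∃ C : Finset (Set (ℕ × ℕ)), IsLocalCover k k (Yd ((2 * k).choose k)) C) ∧
    (∀ i : ℕ, ∀ a ∈ Set.Icc 1 i, ∀ a' ∈ Set.Icc 1 i,
      {b | (a, b) ∈ Yd i} ⊆ {b | (a', b) ∈ Yd i} ∨
      {b | (a', b) ∈ Yd i} ⊆ {b | (a, b) ∈ Yd i}) ∧
    (∀ k : ℕ, ∃ i : ℕ, ¬ ∃ C : Finset (Set (ℕ × ℕ)), IsLocalCover k k (Yd i) C) := by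
  have hnoCover : ∀ k, ¬ ∃ C, IsLocalCover k k (Yd ((2 * k).choose k)) C := by
    rintro k ⟨C, hC⟩
    have := hC.succ_le_choose_of_Yd
    rw [← two_mul] at this
    omega
  refine ⟨fun k _ => ⟨isYoung_Yd _, hnoCover k⟩, fun i a ha a' ha' => ?_,
    fun k => ⟨_, hnoCover k⟩⟩
  rcases le_total a a' with h | h
  · exact .inr (Yd_row_subset_of_le ha.1 h)
  · exact .inl (Yd_row_subset_of_le ha'.1 h)
end
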